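/- Let n be a natural number with n ≤ 8 and let S ⊆ ℤ² be periodic with N_S(x) ≤ n for every x ∈ S. Then S has density exactly 8/(16 − n) if and only if N_S(y) = 8 for every y ∉ S (i.e. no two elements of ℤ² \ S are neighbors) and N_S(x) = n for every x ∈ S. -/

import Mathlib

open Filter Topology

/-- `y` is a neighbor of `x` in the 8-point (Moore) neighborhood of `ℤ²`. -/
def IsNbr (x y : ℤ × ℤ) : Prop :=
  y ≠ x ∧ |y.1 - x.1| ≤ 1 ∧ |y.2 - x.2| ≤ 1

/-- `N_S(x)`: the number of neighbors of `x` lying in `S`. -/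
noncomputable def nbrCount (S : Set (ℤ × ℤ)) (x : ℤ × ℤ) : ℕ :=
  Set.ncard {y ∈ S | IsNbr x y}

/-- The box `B_r = {x : |x₁| < r, |x₂| < r}`. -/
def box (r : ℕ) : Set (ℤ × ℤ) :=
  {x | |x.1| < (r : ℤ) ∧ |x.2| < (r : ℤ)}

/-- `S` has density `d`: the sequence `|S ∩ B_r| / (2r-1)²` tends to `d`. -/
def HasDensity (S : Set (ℤ × ℤ)) (d : ℝ) : Prop :=
  Tendsto (fun r : ℕ => (Set.ncard (S ∩ box r) : ℝ) / (2 * (r : ℝ) - 1) ^ 2) atTop (𝓝 d)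

/-- `S ⊆ ℤ²` is periodic: invariant under two independent positive translations. -/
def Periodic (S : Set (ℤ × ℤ)) : Prop :=
  ∃ p q : ℤ, 0 < p ∧ 0 < q ∧
    (∀ x : ℤ × ℤ, x ∈ S ↔ (x.1 + p, x.2) ∈ S) ∧
    (∀ x : ℤ × ℤ, x ∈ S ↔ (x.1, x.2 + q) ∈ S)

/- The map `ℤ² → ℤ/p × ℤ/q` identifies a periodic `S` with the preimage of a subset `T` of a
finite torus, and `S` has density `|T| / pq`. Counting the directed neighbor pairs from `T` to its
complement in two ways gives `∑_{x ∈ T} (8 - N(x)) = ∑_{y ∉ T} N(y)`; the left side is at least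
`|T| (8 - n)` and the right side at most `8 |Tᶜ|`. Hence `|T| (16 - n) ≤ 8 pq`, i.e. the density is
at most `8 / (16 - n)`, with equality exactly when both estimates are sharp at every point. -/

open Finset

noncomputable def nbrOffsets : Finset (ℤ × ℤ) :=
  (Icc (-1) 1 ×ˢ Icc (-1) 1).erase 0

lemma mem_nbrOffsets {v : ℤ × ℤ} : v ∈ nbrOffsets ↔ v ≠ 0 ∧ |v.1| ≤ 1 ∧ |v.2| ≤ 1 := by
  simp [nbrOffsets, abs_le]

lemma card_nbrOffsets : #nbrOffsets = 8 :=
  rfl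

lemma neg_mem_nbrOffsets {v : ℤ × ℤ} (hv : v ∈ nbrOffsets) : -v ∈ nbrOffsets := by
  rw [mem_nbrOffsets] at hv ⊢
  simpa using hv

lemma isNbr_iff_sub_mem_nbrOffsets {x y : ℤ × ℤ} : IsNbr x y ↔ y - x ∈ nbrOffsets := by
  simp [IsNbr, mem_nbrOffsets, sub_eq_zero]

lemma nbrCount_eq_card_nbrOffsets (S : Set (ℤ × ℤ)) [DecidablePred (· ∈ S)] (x : ℤ × ℤ) :
    nbrCount S x = #{v ∈ nbrOffsets | x + v ∈ S} := by
  have hnbrs : {y ∈ S | IsNbr x y} = (x + ·) '' ↑{v ∈ nbrOffsets | x + v ∈ S} := by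
    ext y
    simp only [Set.mem_ofPred_eq, coe_filter, Set.mem_image, isNbr_iff_sub_mem_nbrOffsets]
    constructor
    · rintro ⟨hy, hxy⟩
      exact ⟨y - x, ⟨hxy, by simpa using hy⟩, by abel⟩
    · rintro ⟨v, ⟨hv, hxv⟩, rfl⟩
      exact ⟨hxv, by simpa using hv⟩
  rw [nbrCount, hnbrs, Set.ncard_image_of_injective _ (add_right_injective x),
    Set.ncard_coe_finset]

section Steps

variable {H G : Type*} [AddGroup H] [AddGroup G] [DecidableEq G]
  (φ : H →+ G) (M : Finset H) (T : Finset G)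

/-- Steps are counted in `H`, with multiplicity: distinct steps may have the same image in `G`. -/
def stepCount (g : G) : ℕ :=
  #{v ∈ M | g + φ v ∈ T}

variable [Fintype G]

lemma sum_card_sub_stepCount_eq (hM : ∀ v ∈ M, -v ∈ M) :
    ∑ x ∈ T, (#M - stepCount φ M T x) = ∑ y ∈ Tᶜ, stepCount φ M T y := by
  have hout (x : G) : #M - stepCount φ M T x = #{v ∈ M | x + φ v ∉ T} := by
    rw [stepCount, ← card_filter_add_card_filter_not (s := M) (fun v => x + φ v ∈ T)]
    omega
  calc ∑ x ∈ T, (#M - stepCount φ M T x)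
      = ∑ x ∈ T, #{v ∈ M | x + φ v ∉ T} := sum_congr rfl fun x _ => hout x
    _ = ∑ v ∈ M, #{x ∈ T | x + φ v ∉ T} :=
        sum_card_bipartiteAbove_eq_sum_card_bipartiteBelow fun x v => x + φ v ∉ T
    _ = ∑ v ∈ M, #{y ∈ Tᶜ | y + φ (-v) ∈ T} := by
        refine sum_congr rfl fun v _ => card_nbij' (· + φ v) (· - φ v) ?_ ?_ ?_ ?_ <;>
          intro x hx <;> simp_all [sub_eq_add_neg]
    _ = ∑ v ∈ M, #{y ∈ Tᶜ | y + φ v ∈ T} :=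
        sum_nbij' Neg.neg Neg.neg hM hM (fun v _ => neg_neg v) (fun v _ => neg_neg v)
          fun v _ => rfl
    _ = ∑ y ∈ Tᶜ, stepCount φ M T y :=
        (sum_card_bipartiteAbove_eq_sum_card_bipartiteBelow fun y v => y + φ v ∈ T).symm

lemma card_mul_card_compl_eq_iff (hM : ∀ v ∈ M, -v ∈ M) {n : ℕ} (hn : n ≤ #M)
    (hdeg : ∀ x ∈ T, stepCount φ M T x ≤ n) :
    #M * #Tᶜ = #T * (#M - n) ↔
      (∀ y ∉ T, stepCount φ M T y = #M) ∧ ∀ x ∈ T, stepCount φ M T x = n := by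
  have hle (g : G) : stepCount φ M T g ≤ #M := card_filter_le _ _
  have hlow : ∀ x ∈ T, #M - n ≤ #M - stepCount φ M T x := fun x hx => by
    have := hdeg x hx
    omega
  have hup : ∀ y ∈ Tᶜ, stepCount φ M T y ≤ #M := fun y _ => hle y
  have hedges := sum_card_sub_stepCount_eq φ M T hM
  have hlow_sum := sum_le_sum hlow
  have hup_sum := sum_le_sum hup
  rw [sum_const, smul_eq_mul] at hlow_sum hup_sum
  constructor
  · intro h
    have hT := (sum_eq_sum_iff_of_le hlow).1 <| by
      rw [sum_const, smul_eq_mul]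
      linarith [mul_comm #M #Tᶜ]
    have hTc := (sum_eq_sum_iff_of_le hup).1 <| by
      rw [sum_const, smul_eq_mul]
      linarith [mul_comm #M #Tᶜ]
    refine ⟨fun y hy => hTc y (mem_compl.2 hy), fun x hx => ?_⟩
    have := hT x hx
    have := hle x
    omega
  · rintro ⟨hTc, hT⟩
    rw [sum_congr rfl fun x hx => by rw [hT x hx],
      sum_congr rfl fun y hy => hTc y (mem_compl.1 hy), sum_const, sum_const] at hedges
    simp only [smul_eq_mul] at hedges
    linarith

end Steps

lemma nbrCount_preimage {G : Type*} [AddGroup G] [DecidableEq G] (φ : ℤ × ℤ →+ G)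
    (T : Finset G) (x : ℤ × ℤ) : nbrCount (φ ⁻¹' T) x = stepCount φ nbrOffsets T (φ x) := by
  classical
  rw [nbrCount_eq_card_nbrOffsets, stepCount]
  simp only [Set.mem_preimage, map_add, mem_coe]

lemma div_sixteen_sub_eq_div_iff {n s t : ℕ} (hn : n ≤ 8) (hst : 0 < s + t) :
    (8 : ℝ) / (16 - n) = s / (s + t) ↔ 8 * t = s * (8 - n) := by
  have h16 : (16 : ℝ) - n ≠ 0 := by
    have : (n : ℝ) ≤ 8 := by exact_mod_cast hn
    linarith
  have hst' : (s : ℝ) + t ≠ 0 := by exact_mod_cast hst.ne'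
  rw [div_eq_div_iff h16 hst', ← Nat.cast_inj (R := ℝ)]
  push_cast [Nat.cast_sub hn]
  constructor <;> intro h <;> linarith

lemma HasDensity.hasDensity_iff {S : Set (ℤ × ℤ)} {d : ℝ} (h : HasDensity S d) {d' : ℝ} :
    HasDensity S d' ↔ d' = d :=
  ⟨fun h' => tendsto_nhds_unique h' h, fun e => e ▸ h⟩

def torusProj (p q : ℕ) : ℤ × ℤ →+ ZMod p × ZMod q :=
  (Int.castAddHom (ZMod p)).prodMap (Int.castAddHom (ZMod q))

@[simp]
lemma torusProj_apply (p q : ℕ) (x : ℤ × ℤ) :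
    torusProj p q x = ((x.1 : ZMod p), (x.2 : ZMod q)) :=
  rfl

lemma torusProj_surjective (p q : ℕ) : Function.Surjective (torusProj p q) :=
  Prod.map_surjective.2 ⟨ZMod.intCast_surjective, ZMod.intCast_surjective⟩

lemma Periodic.exists_eq_preimage_torusProj {S : Set (ℤ × ℤ)} (hS : Periodic S) :
    ∃ (p q : ℕ) (_ : NeZero p) (_ : NeZero q) (T : Finset (ZMod p × ZMod q)),
      S = torusProj p q ⁻¹' T := by
  classical
  obtain ⟨p, q, hp, hq, hSp, hSq⟩ := hS
  lift p to ℕ using hp.le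
  lift q to ℕ using hq.le
  have : NeZero p := ⟨by omega⟩
  have : NeZero q := ⟨by omega⟩
  refine ⟨p, q, inferInstance, inferInstance,
    univ.filter fun t => ((t.1.val : ℤ), (t.2.val : ℤ)) ∈ S, ?_⟩
  ext ⟨a, b⟩
  have hrow : Function.Periodic (fun a' => (a', b) ∈ S) p := fun a' => propext (hSp (a', b)).symm
  have hcol : Function.Periodic (fun b' => (a % p, b') ∈ S) q := fun b' =>
    propext (hSq (a % p, b')).symm
  have hrow' := hrow.sub_int_mul_eq (a / p) (x := a)
  have hcol' := hcol.sub_int_mul_eq (b / q) (x := b)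
  simp only [Int.cast_id, mul_comm _ (p : ℤ), mul_comm _ (q : ℤ), ← Int.emod_def] at hrow' hcol'
  simp only [Set.mem_preimage, mem_coe, mem_filter, mem_univ, true_and, torusProj_apply,
    ZMod.val_intCast, hcol', hrow']

lemma abs_card_filter_intCast_eq_sub_le (p : ℕ) [NeZero p] (a : ZMod p) (r : ℕ) :
    |(#{x ∈ Ico (1 - r : ℤ) r | ((x : ℤ) : ZMod p) = a} : ℝ) - (2 * r - 1) / p| ≤ 1 := by
  obtain ⟨v, rfl⟩ := ZMod.intCast_surjective a
  have hp : (0 : ℚ) < p := by exact_mod_cast Nat.pos_of_neZero p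
  have hcount := Int.Ico_filter_modEq_card (1 - r : ℤ) r (r := p) (by exact_mod_cast hp) v
  simp only [← ZMod.intCast_eq_intCast_iff] at hcount
  set A : ℚ := (((r : ℤ) : ℚ) - v) / ((p : ℤ) : ℚ)
  set B : ℚ := (((1 - r : ℤ) : ℚ) - v) / ((p : ℤ) : ℚ)
  have hAB : A - B = (2 * r - 1) / p := by
    simp only [A, B]
    push_cast
    ring
  have hbound : |(#{x ∈ Ico (1 - r : ℤ) r | ((x : ℤ) : ZMod p) = v} : ℚ) - (A - B)| ≤ 1 := by
    have hcast : (#{x ∈ Ico (1 - r : ℤ) r | ((x : ℤ) : ZMod p) = v} : ℚ) =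
        max ((⌈A⌉ - ⌈B⌉ : ℤ) : ℚ) 0 := by
      exact_mod_cast hcount
    have hAB_ge : -1 ≤ A - B := by
      rw [hAB, le_div_iff₀ hp]
      have : (1 : ℚ) ≤ p := by exact_mod_cast Nat.one_le_iff_ne_zero.2 (NeZero.ne p)
      nlinarith [(r.cast_nonneg : (0 : ℚ) ≤ r)]
    have := Int.le_ceil A
    have := Int.ceil_lt_add_one A
    have := Int.le_ceil B
    have := Int.ceil_lt_add_one B
    rw [hcast, abs_sub_le_iff]
    push_cast
    constructor
    · rcases max_cases ((⌈A⌉ : ℚ) - ⌈B⌉) 0 with ⟨h, -⟩ | ⟨h, -⟩ <;> rw [h] <;> linarith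
    · linarith [le_max_left ((⌈A⌉ : ℚ) - ⌈B⌉) 0]
  rw [hAB] at hbound
  exact_mod_cast hbound

lemma tendsto_two_mul_sub_one_inv :
    Tendsto (fun r : ℕ => (2 * (r : ℝ) - 1)⁻¹) atTop (𝓝 0) :=
  (tendsto_atTop_add_const_right _ (-1)
    (tendsto_natCast_atTop_atTop.const_mul_atTop two_pos)).inv_tendsto_atTop

lemma tendsto_card_filter_intCast_eq_div (p : ℕ) [NeZero p] (a : ZMod p) :
    Tendsto (fun r : ℕ => (#{x ∈ Ico (1 - r : ℤ) r | ((x : ℤ) : ZMod p) = a} : ℝ) / (2 * r - 1))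
      atTop (𝓝 (1 / p)) := by
  rw [tendsto_iff_norm_sub_tendsto_zero]
  refine squeeze_zero' (.of_forall fun _ => norm_nonneg _) ?_ tendsto_two_mul_sub_one_inv
  filter_upwards [eventually_ge_atTop 1] with r hr
  have hR : (0 : ℝ) < 2 * r - 1 := by
    have : (1 : ℝ) ≤ r := by exact_mod_cast hr
    linarith
  have hp : (p : ℝ) ≠ 0 := by exact_mod_cast NeZero.ne p
  set c : ℝ := ((#{x ∈ Ico (1 - r : ℤ) r | ((x : ℤ) : ZMod p) = a} : ℕ) : ℝ)
  have : c / (2 * r - 1) - 1 / p = (c - (2 * r - 1) / p) * (2 * (r : ℝ) - 1)⁻¹ := by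
    field_simp
  rw [this, norm_mul, Real.norm_eq_abs, norm_inv, Real.norm_of_nonneg hR.le]
  exact mul_le_of_le_one_left (by positivity) (abs_card_filter_intCast_eq_sub_le p a r)

lemma box_eq_coe_Ico_product (r : ℕ) :
    box r = ↑(Ico (1 - r : ℤ) r ×ˢ Ico (1 - r : ℤ) r) := by
  ext x
  simp only [_root_.box, abs_lt, Set.mem_ofPred_eq, coe_product, coe_Ico, Set.mem_prod, Set.mem_Ico]
  omega

lemma ncard_preimage_torusProj_inter_box (p q : ℕ) (T : Finset (ZMod p × ZMod q)) (r : ℕ) :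
    (torusProj p q ⁻¹' T ∩ box r).ncard =
      ∑ t ∈ T, #{x ∈ Ico (1 - r : ℤ) r | ((x : ℤ) : ZMod p) = t.1} *
        #{y ∈ Ico (1 - r : ℤ) r | ((y : ℤ) : ZMod q) = t.2} := by
  classical
  have hbox : torusProj p q ⁻¹' T ∩ box r =
      ↑{x ∈ Ico (1 - r : ℤ) r ×ˢ Ico (1 - r : ℤ) r | torusProj p q x ∈ T} := by
    rw [box_eq_coe_Ico_product, coe_filter]
    ext x
    simp only [Set.mem_inter_iff, Set.mem_preimage, mem_coe, Set.mem_ofPred_eq]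
    tauto
  rw [hbox, Set.ncard_coe_finset, card_eq_sum_card_fiberwise (f := torusProj p q) (t := T)
    fun x hx => mem_coe.2 (mem_filter.1 (mem_coe.1 hx)).2]
  refine sum_congr rfl fun t ht => ?_
  rw [← card_product]
  congr 1
  ext ⟨x, y⟩
  simp only [mem_filter, mem_product]
  simp only [torusProj_apply, Prod.ext_iff]
  constructor
  · rintro ⟨⟨hxy, -⟩, hx, hy⟩
    exact ⟨⟨hxy.1, hx⟩, hxy.2, hy⟩
  · rintro ⟨⟨hx', hx⟩, hy', hy⟩
    exact ⟨⟨⟨hx', hy'⟩, by rw [hx, hy]; exact ht⟩, hx, hy⟩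

lemma hasDensity_preimage_torusProj (p q : ℕ) [NeZero p] [NeZero q]
    (T : Finset (ZMod p × ZMod q)) : HasDensity (torusProj p q ⁻¹' T) (#T / (p * q)) := by
  unfold HasDensity
  convert tendsto_finsetSum T fun t _ => (tendsto_card_filter_intCast_eq_div p t.1).mul
    (tendsto_card_filter_intCast_eq_div q t.2) using 1
  · funext r
    rw [ncard_preimage_torusProj_inter_box]
    push_cast
    rw [sum_div]
    refine sum_congr rfl fun t _ => ?_
    rw [div_mul_div_comm, sq]
  · rw [sum_const, nsmul_eq_mul]
    congr 1
    ring

theorem periodic_density_eq_iff (n : ℕ) (hn : n ≤ 8) (S : Set (ℤ × ℤ))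
    (hper : Periodic S) (hdeg : ∀ x ∈ S, nbrCount S x ≤ n) :
    HasDensity S (8 / (16 - (n : ℝ))) ↔
      (∀ y ∉ S, nbrCount S y = 8) ∧ (∀ x ∈ S, nbrCount S x = n) := by
  obtain ⟨p, q, _, _, T, rfl⟩ := hper.exists_eq_preimage_torusProj
  set π := torusProj p q
  have hdegT : ∀ g ∈ T, stepCount π nbrOffsets T g ≤ n := by
    intro g hg
    obtain ⟨x, rfl⟩ := torusProj_surjective p q g
    rw [← nbrCount_preimage]
    exact hdeg x hg
  have hcard : (p * q : ℝ) = #T + #Tᶜ := by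
    rw [← Nat.cast_add, card_add_card_compl, Fintype.card_prod, ZMod.card, ZMod.card,
      Nat.cast_mul]
  have hTpos : 0 < #T + #Tᶜ := by
    rw [card_add_card_compl]
    exact Fintype.card_pos
  have hedges := card_mul_card_compl_eq_iff π nbrOffsets T (fun _ => neg_mem_nbrOffsets)
    (card_nbrOffsets ▸ hn) hdegT
  rw [card_nbrOffsets] at hedges
  rw [(hasDensity_preimage_torusProj p q T).hasDensity_iff, hcard,
    div_sixteen_sub_eq_div_iff hn hTpos, hedges]
  simp only [nbrCount_preimage, Set.mem_preimage, mem_coe]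
  rw [(torusProj_surjective p q).forall, (torusProj_surjective p q).forall]
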